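/- arXiv:1408.4243 — 2 statements merged into one kernel-verified Lean document; each statement's English description precedes it below -/
import Mathlib

section
/- Let f, g : U → ℝ³ be smooth maps with f_v = vϕ, g_v = vψ and the same first fundamental form, and suppose additionally that ϕ·f_u and ψ·g_u agree on U (which follows from the equality of first fundamental forms). Then ψ_v·g_u = ϕ_v·f_u holds along the u-axis {v = 0}. -/
noncomputable section

abbrev E3 : Type := EuclideanSpace ℝ (Fin 3)

/-- Euclidean inner product on `ℝ³`. -/
def dot3 (a b : E3) : ℝ := a 0 * b 0 + a 1 * b 1 + a 2 * b 2

/-- Determinant of the 3×3 matrix with columns `a, b, c`. -/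
def det3 (a b c : E3) : ℝ :=
  a 0 * (b 1 * c 2 - b 2 * c 1) - a 1 * (b 0 * c 2 - b 2 * c 0)
    + a 2 * (b 0 * c 1 - b 1 * c 0)

/-- Cross product in `ℝ³`. -/
def cross3 (a b : E3) : E3 :=
  (WithLp.equiv 2 (Fin 3 → ℝ)).symm
    ![a 1 * b 2 - a 2 * b 1, a 2 * b 0 - a 0 * b 2, a 0 * b 1 - a 1 * b 0]

/-- Partial derivative in the first (`u`) variable. -/
def Du {F : Type} [NormedAddCommGroup F] [NormedSpace ℝ F] (f : ℝ × ℝ → F) :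
    ℝ × ℝ → F := fun p => deriv (fun s => f (s, p.2)) p.1

/-- Partial derivative in the second (`v`) variable. -/
def Dv {F : Type} [NormedAddCommGroup F] [NormedSpace ℝ F] (f : ℝ × ℝ → F) :
    ℝ × ℝ → F := fun p => deriv (fun s => f (p.1, s)) p.2

open Filter Topology

lemma sliceU_hasDerivAt {f : ℝ × ℝ → E3} {p : ℝ × ℝ} (hf : DifferentiableAt ℝ f p) :
    HasDerivAt (fun s => f (s, p.2)) (fderiv ℝ f p (1, 0)) p.1 := by
  have hline : HasDerivAt (fun s : ℝ => (s, p.2)) ((1 : ℝ), (0 : ℝ)) p.1 :=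
    (hasDerivAt_id _).prodMk (hasDerivAt_const _ _)
  exact hf.hasFDerivAt.comp_hasDerivAt p.1 hline

lemma sliceV_hasDerivAt {f : ℝ × ℝ → E3} {p : ℝ × ℝ} (hf : DifferentiableAt ℝ f p) :
    HasDerivAt (fun s => f (p.1, s)) (fderiv ℝ f p (0, 1)) p.2 := by
  have hline : HasDerivAt (fun s : ℝ => (p.1, s)) ((0 : ℝ), (1 : ℝ)) p.2 :=
    (hasDerivAt_const _ _).prodMk (hasDerivAt_id _)
  exact hf.hasFDerivAt.comp_hasDerivAt p.2 hline

lemma Du_eq {f : ℝ × ℝ → E3} {p : ℝ × ℝ} (hf : DifferentiableAt ℝ f p) :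
    Du f p = fderiv ℝ f p (1, 0) := (sliceU_hasDerivAt hf).deriv

lemma Dv_eq {f : ℝ × ℝ → E3} {p : ℝ × ℝ} (hf : DifferentiableAt ℝ f p) :
    Dv f p = fderiv ℝ f p (0, 1) := (sliceV_hasDerivAt hf).deriv

lemma dot3_hasDerivAt {A B : ℝ → E3} {A' B' : E3} {t : ℝ}
    (hA : HasDerivAt A A' t) (hB : HasDerivAt B B' t) :
    HasDerivAt (fun s => dot3 (A s) (B s)) (dot3 A' (B t) + dot3 (A t) B') t := by
  have hAi : ∀ i : Fin 3, HasDerivAt (fun s => A s i) (A' i) t := fun i => by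
    exact (EuclideanSpace.proj (𝕜 := ℝ) i).hasFDerivAt.comp_hasDerivAt t hA
  have hBi : ∀ i : Fin 3, HasDerivAt (fun s => B s i) (B' i) t := fun i => by
    exact (EuclideanSpace.proj (𝕜 := ℝ) i).hasFDerivAt.comp_hasDerivAt t hB
  have := (((hAi 0).mul (hBi 0)).add ((hAi 1).mul (hBi 1))).add ((hAi 2).mul (hBi 2))
  simp only [dot3]
  exact this.congr_deriv (by ring)

lemma mixed_hasDerivAt {U : Set (ℝ × ℝ)} (hU : IsOpen U)
    {f ϕ : ℝ × ℝ → E3} (hf : ContDiffOn ℝ (⊤ : ℕ∞) f U) (hϕ : ContDiffOn ℝ (⊤ : ℕ∞) ϕ U)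
    (hfv : ∀ p ∈ U, Dv f p = p.2 • ϕ p) {p : ℝ × ℝ} (hp : p ∈ U) (h0 : p.2 = 0) :
    HasDerivAt (fun t => Du f (p.1, t)) 0 p.2 := by
  have hUn : U ∈ 𝓝 p := hU.mem_nhds hp
  -- differentiability of f at all points of U
  have hdiff : ∀ q ∈ U, DifferentiableAt ℝ f q := fun q hq =>
    (hf.contDiffAt (hU.mem_nhds hq)).differentiableAt (by simp)
  set f' : ℝ × ℝ → (ℝ × ℝ) →L[ℝ] E3 := fun q => fderiv ℝ f q with hf'def
  have hf' : ContDiffOn ℝ (⊤ : ℕ∞) f' U := hf.fderiv_of_isOpen hU (by simp)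
  have hf'p : DifferentiableAt ℝ f' p :=
    (hf'.contDiffAt hUn).differentiableAt (by simp)
  -- A = directional derivative in u
  set A : ℝ × ℝ → E3 := fun q => f' q (1, 0) with hAdef
  have hAfd : HasFDerivAt A
      ((ContinuousLinearMap.apply ℝ E3 ((1 : ℝ), (0 : ℝ))).comp (fderiv ℝ f' p)) p :=
    (ContinuousLinearMap.apply ℝ E3 ((1 : ℝ), (0 : ℝ))).hasFDerivAt.comp p hf'p.hasFDerivAt
  have hA : DifferentiableAt ℝ A p := hAfd.differentiableAt
  have hslice : HasDerivAt (fun t => A (p.1, t)) (fderiv ℝ A p (0, 1)) p.2 :=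
    sliceV_hasDerivAt hA
  -- Du f agrees with A near (p.1, ·)
  have hmemv : {t : ℝ | (p.1, t) ∈ U} ∈ 𝓝 p.2 := by
    have : IsOpen {t : ℝ | (p.1, t) ∈ U} :=
      hU.preimage (Continuous.prodMk_right p.1)
    exact this.mem_nhds hp
  have heq : (fun t => Du f (p.1, t)) =ᶠ[𝓝 p.2] (fun t => A (p.1, t)) := by
    filter_upwards [hmemv] with t ht
    exact Du_eq (hdiff _ ht)
  have hDuf : HasDerivAt (fun t => Du f (p.1, t)) (fderiv ℝ A p (0, 1)) p.2 :=
    hslice.congr_of_eventuallyEq heq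
  -- compute the value
  have hval1 : fderiv ℝ A p (0, 1) = (fderiv ℝ f' p (0, 1)) (1, 0) := by
    rw [hAfd.fderiv]; rfl
  -- symmetry of second derivative
  have hsymm : (fderiv ℝ f' p (0, 1)) (1, 0) = (fderiv ℝ f' p (1, 0)) (0, 1) := by
    refine second_derivative_symmetric_of_eventually (f := f) ?_ hf'p.hasFDerivAt _ _
    filter_upwards [hUn] with q hq
    exact (hdiff q hq).hasFDerivAt
  -- B = directional derivative in v, equals q.2 • ϕ q on U
  set B : ℝ × ℝ → E3 := fun q => f' q (0, 1) with hBdef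
  have hBfd : HasFDerivAt B
      ((ContinuousLinearMap.apply ℝ E3 ((0 : ℝ), (1 : ℝ))).comp (fderiv ℝ f' p)) p :=
    (ContinuousLinearMap.apply ℝ E3 ((0 : ℝ), (1 : ℝ))).hasFDerivAt.comp p hf'p.hasFDerivAt
  have hval2 : (fderiv ℝ f' p (1, 0)) (0, 1) = fderiv ℝ B p (1, 0) := by
    rw [hBfd.fderiv]; rfl
  have hBeq : B =ᶠ[𝓝 p] (fun q => q.2 • ϕ q) := by
    filter_upwards [hUn] with q hq
    rw [hBdef]
    simp only
    rw [← Dv_eq (hdiff q hq)]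
    exact hfv q hq
  have hϕp : DifferentiableAt ℝ ϕ p :=
    (hϕ.contDiffAt hUn).differentiableAt (by simp)
  have hprod : HasFDerivAt (fun q : ℝ × ℝ => q.2 • ϕ q)
      (p.2 • fderiv ℝ ϕ p + (ContinuousLinearMap.snd ℝ ℝ ℝ).smulRight (ϕ p)) p := by
    have h2 : HasFDerivAt (fun q : ℝ × ℝ => q.2) (ContinuousLinearMap.snd ℝ ℝ ℝ) p :=
      (ContinuousLinearMap.snd ℝ ℝ ℝ).hasFDerivAt
    exact h2.smul hϕp.hasFDerivAt
  have hval3 : fderiv ℝ B p (1, 0) = 0 := by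
    rw [hBeq.fderiv_eq, hprod.fderiv]
    simp [h0]
  have : fderiv ℝ A p (0, 1) = 0 := by
    rw [hval1, hsymm, hval2, hval3]
  rwa [this] at hDuf


theorem stmt_11 (U : Set (ℝ × ℝ)) (hU : IsOpen U)
    (f g ϕ ψ : ℝ × ℝ → E3)
    (hf : ContDiffOn ℝ (⊤ : ℕ∞) f U) (hg : ContDiffOn ℝ (⊤ : ℕ∞) g U)
    (hϕ : ContDiffOn ℝ (⊤ : ℕ∞) ϕ U) (hψ : ContDiffOn ℝ (⊤ : ℕ∞) ψ U)
    (hfv : ∀ p ∈ U, Dv f p = p.2 • ϕ p)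
    (hgv : ∀ p ∈ U, Dv g p = p.2 • ψ p)
    (hE : ∀ p ∈ U, dot3 (Du f p) (Du f p) = dot3 (Du g p) (Du g p))
    (hF : ∀ p ∈ U, dot3 (Du f p) (Dv f p) = dot3 (Du g p) (Dv g p))
    (hG : ∀ p ∈ U, dot3 (Dv f p) (Dv f p) = dot3 (Dv g p) (Dv g p))
    (hagree : ∀ p ∈ U, dot3 (ϕ p) (Du f p) = dot3 (ψ p) (Du g p)) :
    ∀ p ∈ U, p.2 = 0 →
      dot3 (Dv ψ p) (Du g p) = dot3 (Dv ϕ p) (Du f p) := by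
  intro p hp h0
  have hUn : U ∈ 𝓝 p := hU.mem_nhds hp
  have hϕp : DifferentiableAt ℝ ϕ p := (hϕ.contDiffAt hUn).differentiableAt (by simp)
  have hψp : DifferentiableAt ℝ ψ p := (hψ.contDiffAt hUn).differentiableAt (by simp)
  -- slice derivatives of ϕ and ψ
  have Hϕ : HasDerivAt (fun t => ϕ (p.1, t)) (Dv ϕ p) p.2 := by
    rw [Dv_eq hϕp]; exact sliceV_hasDerivAt hϕp
  have Hψ : HasDerivAt (fun t => ψ (p.1, t)) (Dv ψ p) p.2 := by
    rw [Dv_eq hψp]; exact sliceV_hasDerivAt hψp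
  have HDuf : HasDerivAt (fun t => Du f (p.1, t)) 0 p.2 :=
    mixed_hasDerivAt hU hf hϕ hfv hp h0
  have HDug : HasDerivAt (fun t => Du g (p.1, t)) 0 p.2 :=
    mixed_hasDerivAt hU hg hψ hgv hp h0
  have H1 : HasDerivAt (fun t => dot3 (ϕ (p.1, t)) (Du f (p.1, t)))
      (dot3 (Dv ϕ p) (Du f (p.1, p.2)) + dot3 (ϕ (p.1, p.2)) 0) p.2 :=
    dot3_hasDerivAt Hϕ HDuf
  have H2 : HasDerivAt (fun t => dot3 (ψ (p.1, t)) (Du g (p.1, t)))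
      (dot3 (Dv ψ p) (Du g (p.1, p.2)) + dot3 (ψ (p.1, p.2)) 0) p.2 :=
    dot3_hasDerivAt Hψ HDug
  have Hsub := H1.sub H2
  have hmemv : {t : ℝ | (p.1, t) ∈ U} ∈ 𝓝 p.2 :=
    (hU.preimage (Continuous.prodMk_right p.1)).mem_nhds hp
  have hzero : (fun t => dot3 (ϕ (p.1, t)) (Du f (p.1, t))
      - dot3 (ψ (p.1, t)) (Du g (p.1, t))) =ᶠ[𝓝 p.2] (fun _ => (0 : ℝ)) := by
    filter_upwards [hmemv] with t ht
    rw [hagree _ ht, sub_self]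
  have Hz : HasDerivAt (fun _ : ℝ => (0 : ℝ))
      ((dot3 (Dv ϕ p) (Du f (p.1, p.2)) + dot3 (ϕ (p.1, p.2)) 0)
        - (dot3 (Dv ψ p) (Du g (p.1, p.2)) + dot3 (ψ (p.1, p.2)) 0)) p.2 :=
    Hsub.congr_of_eventuallyEq hzero.symm
  have hkey := Hz.unique (hasDerivAt_const _ _)
  have hd0 : ∀ a : E3, dot3 a 0 = 0 := by intro a; simp [dot3]
  rw [hd0, hd0, add_zero, add_zero, Prod.mk.eta] at hkey
  linarith
end
end

section
/- Let g : U → ℝ³ be a smooth map defined near the origin in ℝ², with unit normal vector field ν̃ := (g_u × ψ)/|g_u × ψ| where g_v = vψ, and suppose that along the u-axis: |g_u| = 1, g_v = 0, and {g_u, ψ, ν̃} is orthonormal. If det(g_u(t,0), ψ(t,0), ψ_v(t,0)) ≠ 0 for all t, then ν̃_v(t,0)·ψ(t,0) = −det(g_u(t,0), ψ(t,0), ψ_v(t,0)) ≠ 0; in particular ν̃_v(t,0) ≠ 0. -/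
noncomputable section

lemma cross3_apply0 (a b : E3) : cross3 a b 0 = a 1 * b 2 - a 2 * b 1 := rfl
lemma cross3_apply1 (a b : E3) : cross3 a b 1 = a 2 * b 0 - a 0 * b 2 := rfl
lemma cross3_apply2 (a b : E3) : cross3 a b 2 = a 0 * b 1 - a 1 * b 0 := rfl

lemma norm_E3_eq (x : E3) : ‖x‖ = Real.sqrt (x 0 ^ 2 + x 1 ^ 2 + x 2 ^ 2) := by
  rw [EuclideanSpace.norm_eq]
  simp [Fin.sum_univ_three, Real.norm_eq_abs, sq_abs]

lemma hasDerivAt_E3 {f : ℝ → E3} {f' : E3} {x : ℝ} :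
    HasDerivAt f f' x ↔ ∀ i, HasDerivAt (fun s => f s i) (f' i) x := by
  constructor
  · intro h i
    exact ((EuclideanSpace.proj (𝕜 := ℝ) (i : Fin 3)).hasFDerivAt).comp_hasDerivAt x h
  · intro h
    have h1 : HasDerivAt (fun s (i : Fin 3) => f s i) (fun i => f' i) x := hasDerivAt_pi.2 h
    exact (((EuclideanSpace.equiv (Fin 3) ℝ).symm :
      (Fin 3 → ℝ) →L[ℝ] E3).hasFDerivAt).comp_hasDerivAt x h1

lemma hasDerivAt_slice_v {F : Type*} [NormedAddCommGroup F] [NormedSpace ℝ F]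
    {h : ℝ × ℝ → F} {h' : ℝ × ℝ →L[ℝ] F} {p : ℝ × ℝ} (hh : HasFDerivAt h h' p) :
    HasDerivAt (fun s => h (p.1, s)) (h' (0, 1)) p.2 := by
  have line : HasDerivAt (fun s : ℝ => ((p.1 : ℝ), s)) ((0 : ℝ), (1 : ℝ)) p.2 :=
    HasDerivAt.prodMk (hasDerivAt_const _ _) (hasDerivAt_id _)
  exact (Prod.mk.eta (p := p) ▸ hh).comp_hasDerivAt p.2 line

lemma hasDerivAt_slice_u {F : Type*} [NormedAddCommGroup F] [NormedSpace ℝ F]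
    {h : ℝ × ℝ → F} {h' : ℝ × ℝ →L[ℝ] F} {p : ℝ × ℝ} (hh : HasFDerivAt h h' p) :
    HasDerivAt (fun s => h (s, p.2)) (h' (1, 0)) p.1 := by
  have line : HasDerivAt (fun s : ℝ => (s, (p.2 : ℝ))) ((1 : ℝ), (0 : ℝ)) p.1 :=
    HasDerivAt.prodMk (hasDerivAt_id _) (hasDerivAt_const _ _)
  exact (Prod.mk.eta (p := p) ▸ hh).comp_hasDerivAt p.1 line

theorem stmt_12 (U : Set (ℝ × ℝ)) (hU : IsOpen U) (h0 : (0, 0) ∈ U)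
    (g ψ : ℝ × ℝ → E3)
    (hg : ContDiffOn ℝ (⊤ : ℕ∞) g U) (hψ : ContDiffOn ℝ (⊤ : ℕ∞) ψ U)
    (hgv : ∀ p ∈ U, Dv g p = p.2 • ψ p)
    (ν : ℝ × ℝ → E3)
    (hν : ∀ p, ν p = ‖cross3 (Du g p) (ψ p)‖⁻¹ • cross3 (Du g p) (ψ p))
    (hunit : ∀ t : ℝ, (t, 0) ∈ U → ‖Du g (t, 0)‖ = 1)
    (hgv0 : ∀ t : ℝ, (t, 0) ∈ U → Dv g (t, 0) = 0)
    (hψ1 : ∀ t : ℝ, (t, 0) ∈ U → ‖ψ (t, 0)‖ = 1)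
    (horth : ∀ t : ℝ, (t, 0) ∈ U → dot3 (Du g (t, 0)) (ψ (t, 0)) = 0)
    (hdet : ∀ t : ℝ, (t, 0) ∈ U →
      det3 (Du g (t, 0)) (ψ (t, 0)) (Dv ψ (t, 0)) ≠ 0) :
    ∀ t : ℝ, (t, 0) ∈ U →
      dot3 (Dv ν (t, 0)) (ψ (t, 0)) =
        -det3 (Du g (t, 0)) (ψ (t, 0)) (Dv ψ (t, 0)) ∧
      Dv ν (t, 0) ≠ 0 := by
  intro t ht
  -- basic differentiability facts
  have hgd : ∀ p ∈ U, HasFDerivAt g (fderiv ℝ g p) p := fun p hp =>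
    ((hg.contDiffAt (hU.mem_nhds hp)).differentiableAt (by simp)).hasFDerivAt
  have hψd : HasFDerivAt ψ (fderiv ℝ ψ (t, 0)) (t, 0) :=
    ((hψ.contDiffAt (hU.mem_nhds ht)).differentiableAt (by simp)).hasFDerivAt
  have hDu : ∀ p ∈ U, Du g p = fderiv ℝ g p (1, 0) := fun p hp =>
    (hasDerivAt_slice_u (hgd p hp)).deriv
  have hDvg : ∀ p ∈ U, Dv g p = fderiv ℝ g p (0, 1) := fun p hp =>
    (hasDerivAt_slice_v (hgd p hp)).deriv
  -- eventual membership in U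
  have hmem_u : ∀ᶠ s in nhds t, ((s : ℝ), (0 : ℝ)) ∈ U := by
    have hc : ContinuousAt (fun s : ℝ => (s, (0 : ℝ))) t :=
      (continuous_id.prodMk continuous_const).continuousAt
    exact hc (hU.mem_nhds ht)
  have hmem_v : ∀ᶠ s in nhds (0 : ℝ), ((t : ℝ), (s : ℝ)) ∈ U := by
    have hc : ContinuousAt (fun s : ℝ => ((t : ℝ), s)) 0 :=
      (continuous_const.prodMk continuous_id).continuousAt
    exact hc (hU.mem_nhds ht)
  -- second derivative of g and Clairaut
  have hg2 : ContDiffAt ℝ (⊤ : ℕ∞) g (t, 0) := hg.contDiffAt (hU.mem_nhds ht)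
  have hf'd : HasFDerivAt (fderiv ℝ g) (fderiv ℝ (fderiv ℝ g) (t, 0)) (t, 0) :=
    ((hg2.fderiv_right (m := 1) (by exact WithTop.coe_le_coe.2 le_top)).differentiableAt one_ne_zero).hasFDerivAt
  have hsymm := second_derivative_symmetric_of_eventually
    (Filter.eventually_of_mem (hU.mem_nhds ht) hgd) hf'd
  -- fderiv² (1,0) (0,1) = 0
  have h10 : fderiv ℝ (fderiv ℝ g) (t, 0) (1, 0) (0, 1) = 0 := by
    have h1 : HasDerivAt (fun s => fderiv ℝ g (s, 0)) (fderiv ℝ (fderiv ℝ g) (t, 0) (1, 0)) t :=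
      hasDerivAt_slice_u hf'd
    have h2 : HasDerivAt (fun s => fderiv ℝ g (s, 0) (0, 1))
        (fderiv ℝ (fderiv ℝ g) (t, 0) (1, 0) (0, 1)) t := by
      simpa using h1.clm_apply (hasDerivAt_const t ((0 : ℝ), (1 : ℝ)))
    have h3 : HasDerivAt (fun s : ℝ => fderiv ℝ g (s, 0) (0, 1)) 0 t := by
      apply (hasDerivAt_const t (0 : E3)).congr_of_eventuallyEq
      filter_upwards [hmem_u] with s hs
      rw [← hDvg (s, 0) hs]
      exact hgv0 s hs
    exact h2.unique h3
  -- HasDerivAt of s ↦ Du g (t,s) at 0 with derivative 0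
  have hDuv : HasDerivAt (fun s => Du g (t, s)) 0 0 := by
    have h1 : HasDerivAt (fun s => fderiv ℝ g (t, s)) (fderiv ℝ (fderiv ℝ g) (t, 0) (0, 1)) 0 :=
      hasDerivAt_slice_v hf'd
    have h2 : HasDerivAt (fun s => fderiv ℝ g (t, s) (1, 0))
        (fderiv ℝ (fderiv ℝ g) (t, 0) (0, 1) (1, 0)) 0 := by
      simpa using h1.clm_apply (hasDerivAt_const (0 : ℝ) ((1 : ℝ), (0 : ℝ)))
    rw [hsymm (0, 1) (1, 0), h10] at h2
    apply h2.congr_of_eventuallyEq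
    filter_upwards [hmem_v] with s hs
    exact hDu (t, s) hs
  -- derivative of ψ in v
  set V : E3 := fderiv ℝ ψ (t, 0) (0, 1) with hV
  have hψv : HasDerivAt (fun s => ψ (t, s)) V 0 := hasDerivAt_slice_v hψd
  have hDvψ : Dv ψ (t, 0) = V := hψv.deriv
  -- components
  have hA : ∀ i, HasDerivAt (fun s => Du g (t, s) i) 0 0 := by
    intro i; simpa using hasDerivAt_E3.1 hDuv i
  have hB : ∀ i, HasDerivAt (fun s => ψ (t, s) i) (V i) 0 := hasDerivAt_E3.1 hψv
  set c' : E3 := cross3 (Du g (t, 0)) V with hc'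
  have key0 : HasDerivAt (fun s => Du g (t, s) 1 * ψ (t, s) 2 - Du g (t, s) 2 * ψ (t, s) 1)
      (Du g (t, 0) 1 * V 2 - Du g (t, 0) 2 * V 1) 0 := by
    have := ((hA 1).mul (hB 2)).sub ((hA 2).mul (hB 1))
    exact this.congr_deriv (by ring)
  have key1 : HasDerivAt (fun s => Du g (t, s) 2 * ψ (t, s) 0 - Du g (t, s) 0 * ψ (t, s) 2)
      (Du g (t, 0) 2 * V 0 - Du g (t, 0) 0 * V 2) 0 := by
    have := ((hA 2).mul (hB 0)).sub ((hA 0).mul (hB 2))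
    exact this.congr_deriv (by ring)
  have key2 : HasDerivAt (fun s => Du g (t, s) 0 * ψ (t, s) 1 - Du g (t, s) 1 * ψ (t, s) 0)
      (Du g (t, 0) 0 * V 1 - Du g (t, 0) 1 * V 0) 0 := by
    have := ((hA 0).mul (hB 1)).sub ((hA 1).mul (hB 0))
    exact this.congr_deriv (by ring)
  have hC : HasDerivAt (fun s => cross3 (Du g (t, s)) (ψ (t, s))) c' 0 := by
    rw [hasDerivAt_E3]
    intro i
    fin_cases i
    · exact key0
    · exact key1
    · exact key2
  have hCi := hasDerivAt_E3.1 hC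
  set c0 : E3 := cross3 (Du g (t, 0)) (ψ (t, 0)) with hc0
  -- norm of c0 is 1
  have e1 : Du g (t, 0) 0 ^ 2 + Du g (t, 0) 1 ^ 2 + Du g (t, 0) 2 ^ 2 = 1 := by
    have := norm_E3_eq (Du g (t, 0))
    rw [hunit t ht] at this
    have h := congrArg (· ^ 2) this
    simp only [one_pow] at h
    rw [Real.sq_sqrt (by positivity)] at h
    linarith [h.symm]
  have e2 : ψ (t, 0) 0 ^ 2 + ψ (t, 0) 1 ^ 2 + ψ (t, 0) 2 ^ 2 = 1 := by
    have := norm_E3_eq (ψ (t, 0))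
    rw [hψ1 t ht] at this
    have h := congrArg (· ^ 2) this
    simp only [one_pow] at h
    rw [Real.sq_sqrt (by positivity)] at h
    linarith [h.symm]
  have e3 := horth t ht
  have hq0 : c0 0 * c0 0 + (c0 1 * c0 1 + c0 2 * c0 2) = 1 := by
    simp only [hc0, cross3_apply0, cross3_apply1, cross3_apply2]
    simp only [dot3] at e3
    nlinarith [e1, e2, e3]
  have hnormc0 : ‖c0‖ = 1 := by
    rw [norm_E3_eq]
    rw [show c0 0 ^ 2 + c0 1 ^ 2 + c0 2 ^ 2
      = c0 0 * c0 0 + (c0 1 * c0 1 + c0 2 * c0 2) by ring, hq0, Real.sqrt_one]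
  -- derivative of the norm factor
  set q : ℝ → ℝ := fun s => cross3 (Du g (t, s)) (ψ (t, s)) 0 * cross3 (Du g (t, s)) (ψ (t, s)) 0
      + (cross3 (Du g (t, s)) (ψ (t, s)) 1 * cross3 (Du g (t, s)) (ψ (t, s)) 1
      + cross3 (Du g (t, s)) (ψ (t, s)) 2 * cross3 (Du g (t, s)) (ψ (t, s)) 2) with hqdef
  have hq : HasDerivAt q
      (c' 0 * c0 0 + c0 0 * c' 0 + (c' 1 * c0 1 + c0 1 * c' 1 + (c' 2 * c0 2 + c0 2 * c' 2))) 0 :=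
    ((hCi 0).mul (hCi 0)).add (((hCi 1).mul (hCi 1)).add ((hCi 2).mul (hCi 2)))
  have hq1 : q 0 = 1 := hq0
  obtain ⟨r, hN⟩ : ∃ r, HasDerivAt (fun s => ‖cross3 (Du g (t, s)) (ψ (t, s))‖⁻¹) r 0 := by
    have hNeq : (fun s => ‖cross3 (Du g (t, s)) (ψ (t, s))‖⁻¹)
        = fun s => (Real.sqrt (q s))⁻¹ := by
      funext s
      rw [norm_E3_eq]
      simp only [hqdef]
      ring_nf
    have hsqrt : HasDerivAt Real.sqrt (1 / (2 * Real.sqrt 1)) (q 0) := by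
      rw [hq1]; exact Real.hasDerivAt_sqrt one_ne_zero
    have hsq := hsqrt.comp 0 hq
    have hne : (Real.sqrt ∘ q) 0 ≠ 0 := by
      simp only [Function.comp_apply, hq1, Real.sqrt_one]
      exact one_ne_zero
    have hinv := hsq.inv hne
    rw [hNeq]
    exact ⟨_, hinv⟩
  -- derivative of ν slice
  have heq : (fun s => ν (t, s))
      = fun s => ‖cross3 (Du g (t, s)) (ψ (t, s))‖⁻¹ • cross3 (Du g (t, s)) (ψ (t, s)) := by
    funext s; exact hν (t, s)
  have hνs : HasDerivAt (fun s => ν (t, s)) (c' + r • c0) 0 := by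
    have h := hN.smul hC
    rw [← hc0, hnormc0, inv_one, one_smul] at h
    rw [heq]
    exact h
  have hDvν : Dv ν (t, 0) = c' + r • c0 := hνs.deriv
  -- the dot product identity
  have hdotc0 : dot3 c0 (ψ (t, 0)) = 0 := by
    simp only [hc0, dot3, cross3_apply0, cross3_apply1, cross3_apply2]
    ring
  have key : dot3 (Dv ν (t, 0)) (ψ (t, 0)) = -det3 (Du g (t, 0)) (ψ (t, 0)) V := by
    rw [hDvν]
    have expand : dot3 (c' + r • c0) (ψ (t, 0))
        = dot3 c' (ψ (t, 0)) + r * dot3 c0 (ψ (t, 0)) := by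
      simp only [dot3, PiLp.add_apply, PiLp.smul_apply, smul_eq_mul]
      ring
    rw [expand, hdotc0, mul_zero, add_zero]
    simp only [hc', dot3, det3, cross3_apply0, cross3_apply1, cross3_apply2]
    ring
  rw [hDvψ]
  refine ⟨key, ?_⟩
  intro hzero
  rw [hzero] at key
  simp only [dot3, PiLp.zero_apply, zero_mul, add_zero] at key
  exact (hDvψ ▸ hdet t ht) (by linarith [key])
end
end
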